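/- If P is a positive definite real n×n matrix with P ≥ I and a real n×n matrix F satisfies F P Fᵀ − P + I ≤ 0 (in the Loewner order), then F is Schur stable, i.e., every eigenvalue of F has absolute value strictly less than 1. -/

import Mathlib

/-!
Let `μ` be an eigenvalue of `F`, so that `conj μ` is an eigenvalue of `Fᴴ`, with eigenvector `v`
(over `ℂ`). Then `v* (F P Fᴴ) v = |μ|² v* P v`, and the Lyapunov inequality tested at `v` reads
`|μ|² q - q + |v|² ≤ 0` with `q = v* P v`. Since `P ≥ I` gives `q ≥ |v|² > 0`, this forces
`|μ|² < 1`.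
-/

open Matrix Finset
open scoped RealInnerProductSpace

/-- Operator (spectral) norm of a real matrix, induced by Euclidean norms. -/
noncomputable def opNorm {m n : Type*} [Fintype m] [Fintype n] [DecidableEq n]
    (M : Matrix m n ℝ) : ℝ :=
  ‖LinearMap.toContinuousLinearMap (Matrix.toEuclideanLin M)‖

/-- A real square matrix is Schur stable if all its (complex) eigenvalues have
modulus strictly less than one. -/
def SchurStable {n : Type*} [Fintype n] [DecidableEq n] (F : Matrix n n ℝ) : Prop :=
  ∀ μ ∈ spectrum ℂ (F.map (algebraMap ℝ ℂ)), ‖μ‖ < 1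

open scoped ComplexOrder

namespace Matrix

variable {n : Type*} [Fintype n] {𝕜 : Type*} [RCLike 𝕜]

lemma PosSemidef.map_algebraMap_real {A : Matrix n n ℝ} (hA : A.PosSemidef) :
    (A.map (algebraMap ℝ 𝕜)).PosSemidef := by
  classical
  obtain ⟨B, rfl⟩ : ∃ B : Matrix n n ℝ, A = star B * B := by
    open scoped MatrixOrder in
    exact CStarAlgebra.nonneg_iff_eq_star_mul_self.mp hA.nonneg
  rw [star_eq_conjTranspose, Matrix.map_mul, conjTranspose_map _ fun x ↦ by simp]
  exact posSemidef_conjTranspose_mul_self _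

lemma dotProduct_mul_mul_conjTranspose_mulVec_of_mulVec_eq_smul {M P : Matrix n n 𝕜} {v : n → 𝕜}
    {μ : 𝕜} (hv : Mᴴ *ᵥ v = μ • v) :
    star v ⬝ᵥ (M * P * Mᴴ) *ᵥ v = ((‖μ‖ ^ 2 : ℝ) : 𝕜) * (star v ⬝ᵥ P *ᵥ v) := by
  have hstar : star v ᵥ* M = star (μ • v) := by
    rw [← hv, star_mulVec, conjTranspose_conjTranspose]
  rw [← mulVec_mulVec, ← mulVec_mulVec, hv, dotProduct_mulVec, hstar, mulVec_smul, star_smul,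
    smul_dotProduct, dotProduct_smul, smul_eq_mul, smul_eq_mul, ← mul_assoc, RCLike.star_def,
    RCLike.conj_mul]
  push_cast
  ring

variable [DecidableEq n]

lemma exists_mulVec_eq_smul_of_mem_spectrum {K : Type*} [Field K] {M : Matrix n n K} {μ : K}
    (h : μ ∈ spectrum K M) : ∃ v : n → K, v ≠ 0 ∧ M *ᵥ v = μ • v := by
  rw [← spectrum_toLin'] at h
  obtain ⟨v, hv⟩ := (Module.End.HasEigenvalue.of_mem_spectrum h).exists_hasEigenvector
  exact ⟨v, hv.2, by simpa using Module.End.mem_eigenspace_iff.mp hv.1⟩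

lemma star_mem_spectrum_conjTranspose {M : Matrix n n 𝕜} {μ : 𝕜} (h : μ ∈ spectrum 𝕜 M) :
    star μ ∈ spectrum 𝕜 Mᴴ := by
  rwa [← star_eq_conjTranspose, spectrum.map_star, Set.mem_star, star_star]

lemma norm_lt_one_of_lyapunov_of_mulVec_eq_smul {M P : Matrix n n 𝕜}
    (hPI : (P - 1).PosSemidef) (hLyap : (-(M * P * Mᴴ - P + 1)).PosSemidef)
    {v : n → 𝕜} (hv0 : v ≠ 0) {μ : 𝕜} (hv : Mᴴ *ᵥ v = μ • v) : ‖μ‖ < 1 := by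
  set q := RCLike.re (star v ⬝ᵥ P *ᵥ v)
  set N := RCLike.re (star v ⬝ᵥ v)
  have hN : 0 < N := by simpa using PosDef.one.re_dotProduct_pos (𝕜 := 𝕜) hv0
  have hNq : N ≤ q := by
    have := hPI.re_dotProduct_nonneg v
    rw [sub_mulVec, one_mulVec, dotProduct_sub, map_sub] at this
    linarith
  have hdecay : ‖μ‖ ^ 2 * q - q + N ≤ 0 := by
    have := hLyap.re_dotProduct_nonneg v
    rw [neg_mulVec, add_mulVec, sub_mulVec, one_mulVec, dotProduct_neg, dotProduct_add,
      dotProduct_sub, dotProduct_mul_mul_conjTranspose_mulVec_of_mulVec_eq_smul hv] at this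
    simpa only [map_neg, map_add, map_sub, RCLike.re_ofReal_mul, neg_nonneg] using this
  have : ‖μ‖ ^ 2 < 1 := by nlinarith
  nlinarith [norm_nonneg μ]

lemma norm_lt_one_of_mem_spectrum_of_lyapunov {M P : Matrix n n 𝕜}
    (hPI : (P - 1).PosSemidef) (hLyap : (-(M * P * Mᴴ - P + 1)).PosSemidef)
    {μ : 𝕜} (hμ : μ ∈ spectrum 𝕜 M) : ‖μ‖ < 1 := by
  obtain ⟨v, hv0, hv⟩ := exists_mulVec_eq_smul_of_mem_spectrum (star_mem_spectrum_conjTranspose hμ)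
  simpa using norm_lt_one_of_lyapunov_of_mulVec_eq_smul hPI hLyap hv0 hv

end Matrix

theorem stmt0_general {n : Type*} [Fintype n] [DecidableEq n]
    (P F : Matrix n n ℝ) (hPI : (P - 1).PosSemidef)
    (hLyap : (-(F * P * Fᵀ - P + 1)).PosSemidef) :
    SchurStable F := by
  set φ := (algebraMap ℝ ℂ).mapMatrix (m := n)
  have hFT : φ Fᵀ = (φ F)ᴴ := by
    rw [← conjTranspose_eq_transpose_of_trivial]
    exact conjTranspose_map _ fun x ↦ by simp
  have hP' := hPI.map_algebraMap_real (𝕜 := ℂ)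
  have hLyap' := hLyap.map_algebraMap_real (𝕜 := ℂ)
  rw [← RingHom.mapMatrix_apply, map_sub, map_one] at hP'
  rw [← RingHom.mapMatrix_apply, map_neg, map_add, map_sub, map_mul, map_mul, map_one, hFT]
    at hLyap'
  exact fun μ hμ ↦ norm_lt_one_of_mem_spectrum_of_lyapunov hP' hLyap' hμ

/-- If `P ⪰ I` is positive definite and `F P Fᵀ - P + I ⪯ 0`
(Loewner order), then `F` is Schur stable. -/
theorem stmt0 {n : Type*} [Fintype n] [DecidableEq n]
    (P F : Matrix n n ℝ) (hP : P.PosDef) (hPI : (P - 1).PosSemidef)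
    (hLyap : (-(F * P * Fᵀ - P + 1)).PosSemidef) :
    SchurStable F :=
  stmt0_general P F hPI hLyap
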